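/- arXiv:1611.04203 — 4 statements merged into one kernel-verified Lean document; each statement's English description precedes it below -/
import Mathlib

section
/- For all real numbers u, v with 0 ≤ u ≤ 1, 0 ≤ v ≤ 1, and u + v > 1, one has q(u) + q(v) − q(uv) − 1 = (1−u)(1−v)(u+v+uv−1), and this quantity is nonnegative. -/
noncomputable def q (x : ℝ) : ℝ := if x ≤ 1 then x * (2 - x) else 1

lemma q_of_le_one {x : ℝ} (hx : x ≤ 1) : q x = x * (2 - x) := if_pos hx

lemma q_add_q_sub_q_mul_sub_one {u v : ℝ} (hu : u ≤ 1) (hv : v ≤ 1) (huv : u * v ≤ 1) :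
    q u + q v - q (u * v) - 1 = (1 - u) * (1 - v) * (u + v + u * v - 1) := by
  rw [q_of_le_one hu, q_of_le_one hv, q_of_le_one huv]
  ring

lemma potential_factor_nonneg {u v : ℝ} (hu : u ≤ 1) (hv : v ≤ 1) (hsum : 1 < u + v) :
    0 ≤ (1 - u) * (1 - v) * (u + v + u * v - 1) := by
  have huv : 0 ≤ u * v := mul_nonneg (by linarith) (by linarith)
  have h₁ : 0 ≤ (1 - u) * (1 - v) := mul_nonneg (by linarith) (by linarith)
  exact mul_nonneg h₁ (by linarith)

theorem potential_identity_large_general (u v : ℝ) (hu1 : u ≤ 1)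
    (hv1 : v ≤ 1) (hsum : 1 < u + v) :
    q u + q v - q (u * v) - 1 = (1 - u) * (1 - v) * (u + v + u * v - 1) ∧
    0 ≤ (1 - u) * (1 - v) * (u + v + u * v - 1) :=
  ⟨q_add_q_sub_q_mul_sub_one hu1 hv1 (mul_le_one₀ hu1 (by linarith) hv1),
    potential_factor_nonneg hu1 hv1 hsum⟩

theorem potential_identity_large (u v : ℝ) (hu : 0 ≤ u) (hu1 : u ≤ 1)
    (hv : 0 ≤ v) (hv1 : v ≤ 1) (hsum : 1 < u + v) :
    q u + q v - q (u * v) - 1 = (1 - u) * (1 - v) * (u + v + u * v - 1) ∧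
    0 ≤ (1 - u) * (1 - v) * (u + v + u * v - 1) :=
  potential_identity_large_general u v hu1 hv1 hsum
end

section
/- For a binary symmetric channel with crossover probability p ∈ [0,1], the symmetric capacity satisfies I ≤ 1 − Z², where I = 1 + p log₂ p + (1−p) log₂(1−p) and Z = 2√(p(1−p)). -/
/-!
Writing `p = (1 + t) / 2`, the claim is `(1 + t) log (1 + t) + (1 - t) log (1 - t) ≤ 2 log 2 · t²`.
For `|t| < 1` the left side is `∑ t ^ (2k+2) / ((k+1)(2k+1))`, a series with nonnegative
coefficients, so its quotient by `t²` is nondecreasing in `|t|`; by continuity it is bounded by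
its value `2 log 2` at `t = 1`.
-/

open Real Filter Topology

noncomputable def symmMulLog (t : ℝ) : ℝ := (1 + t) * log (1 + t) + (1 - t) * log (1 - t)

lemma continuous_symmMulLog : Continuous symmMulLog := by
  unfold symmMulLog
  fun_prop

lemma symmMulLog_eq_two_mul_log_two_sub_binEntropy (t : ℝ) :
    symmMulLog t = 2 * (log 2 - binEntropy ((1 + t) / 2)) := by
  have mul_log_half (x : ℝ) : x / 2 * log (x / 2) = (x * log x - x * log 2) / 2 := by
    rcases eq_or_ne x 0 with rfl | hx
    · simp
    · rw [log_div hx two_ne_zero]; ring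
  have h : 1 - (1 + t) / 2 = (1 - t) / 2 := by ring
  simp only [binEntropy, log_inv, h, mul_neg, mul_log_half, symmMulLog]
  ring

lemma hasSum_symmMulLog {t : ℝ} (ht : |t| < 1) :
    HasSum (fun k : ℕ => t ^ (2 * k + 2) / ((k + 1) * (2 * k + 1))) (symmMulLog t) := by
  have ht2 : |t ^ 2| < 1 := by
    rw [abs_pow]; exact pow_lt_one₀ (abs_nonneg t) ht two_ne_zero
  have hlog : log (1 - t ^ 2) = log (1 + t) + log (1 - t) := by
    obtain ⟨h₁, h₂⟩ := abs_lt.mp ht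
    rw [← log_mul (by linarith) (by linarith)]; ring_nf
  have hsum := ((hasSum_log_sub_log_of_abs_lt_one ht).mul_left t).sub
    (hasSum_pow_div_log_of_abs_lt_one ht2)
  have hval : symmMulLog t = t * (log (1 + t) - log (1 - t)) - -log (1 - t ^ 2) := by
    rw [symmMulLog, hlog]
    ring
  have hterm (k : ℕ) : t * (2 * (1 / (2 * k + 1)) * t ^ (2 * k + 1)) - (t ^ 2) ^ (k + 1) / (k + 1)
      = t ^ (2 * k + 2) / ((k + 1) * (2 * k + 1)) := by
    field_simp
    ring
  simpa only [hterm, ← hval] using hsum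

lemma symmMulLog_mul_sq_le {t u : ℝ} (htu : |t| ≤ |u|) (hu : |u| < 1) :
    symmMulLog t * u ^ 2 ≤ symmMulLog u * t ^ 2 := by
  have hsq : t ^ 2 ≤ u ^ 2 := sq_le_sq.mpr htu
  refine hasSum_le (fun k => ?_) ((hasSum_symmMulLog (htu.trans_lt hu)).mul_right _)
    ((hasSum_symmMulLog hu).mul_right _)
  calc t ^ (2 * k + 2) / ((k + 1) * (2 * k + 1)) * u ^ 2
      = (t ^ 2) ^ k * (t ^ 2 * u ^ 2) / ((k + 1) * (2 * k + 1)) := by ring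
    _ ≤ (u ^ 2) ^ k * (t ^ 2 * u ^ 2) / ((k + 1) * (2 * k + 1)) := by gcongr
    _ = u ^ (2 * k + 2) / ((k + 1) * (2 * k + 1)) * t ^ 2 := by ring

lemma symmMulLog_le {t : ℝ} (ht : |t| ≤ 1) : symmMulLog t ≤ 2 * log 2 * t ^ 2 := by
  rcases ht.lt_or_eq with ht | ht
  · have hlim (f : ℝ → ℝ) (hf : Continuous f) : Tendsto f (𝓝[<] 1) (𝓝 (f 1)) :=
      hf.continuousAt.tendsto.mono_left nhdsWithin_le_nhds
    have hsymm : symmMulLog 1 = 2 * log 2 := by norm_num [symmMulLog]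
    have hu : ∀ᶠ u in 𝓝[<] (1 : ℝ), symmMulLog t * u ^ 2 ≤ symmMulLog u * t ^ 2 := by
      filter_upwards [Ioo_mem_nhdsLT ht] with u hu
      exact symmMulLog_mul_sq_le (hu.1.le.trans (le_abs_self u))
        (abs_lt.mpr ⟨by linarith [abs_nonneg t, hu.1], hu.2⟩)
    have := le_of_tendsto_of_tendsto (hlim (fun u => symmMulLog t * u ^ 2) (by fun_prop))
      (hlim (fun u => symmMulLog u * t ^ 2) (continuous_symmMulLog.mul continuous_const)) hu
    simpa [hsymm] using this
  · rcases (abs_eq zero_le_one).mp ht with rfl | rfl <;> norm_num [symmMulLog]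

lemma four_mul_mul_one_sub_mul_log_two_le_binEntropy {p : ℝ} (hp : p ∈ Set.Icc (0 : ℝ) 1) :
    4 * (p * (1 - p)) * log 2 ≤ binEntropy p := by
  have ht : |2 * p - 1| ≤ 1 := abs_le.mpr ⟨by linarith [hp.1], by linarith [hp.2]⟩
  have hdef := symmMulLog_eq_two_mul_log_two_sub_binEntropy (2 * p - 1)
  rw [show (1 + (2 * p - 1)) / 2 = p by ring] at hdef
  linarith [symmMulLog_le ht]

theorem bsc_capacity_le_one_sub_Z_sq (p : ℝ) (hp : p ∈ Set.Icc (0:ℝ) 1)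
    (I Z : ℝ) (hI : I = 1 + p * Real.logb 2 p + (1 - p) * Real.logb 2 (1 - p))
    (hZ : Z = 2 * Real.sqrt (p * (1 - p))) :
    I ≤ 1 - Z ^ 2 := by
  have hI' : I = 1 - binEntropy p / log 2 := by
    rw [hI, logb, logb, binEntropy, log_inv, log_inv]
    ring
  have hZ' : Z ^ 2 = 4 * (p * (1 - p)) := by
    rw [hZ, mul_pow, sq_sqrt (mul_nonneg hp.1 (sub_nonneg.mpr hp.2))]
    norm_num
  rw [hI', hZ', sub_le_sub_iff_left, le_div_iff₀ (log_pos one_lt_two)]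
  exact four_mul_mul_one_sub_mul_log_two_le_binEntropy hp
end

section
/- Under the hypotheses above, the number of indices i with zᵢ ≤ t is at least Σᵢ Iᵢ − (2/t)·Σᵢ zᵢᵇ(1−zᵢ)ᵇ. -/
/-!
Each index contributes at most `1_{zᵢ ≤ t} + (2/t) f(zᵢ)` to `∑ Iᵢ`. Below the threshold this is
`Iᵢ ≤ 1`. Above it, `Iᵢ ≤ 1 - zᵢ² ≤ 2(1 - zᵢ)`, while `x ≤ xᵇ` on `[0, 1]` gives
`f(zᵢ) ≥ zᵢ(1 - zᵢ) ≥ t(1 - zᵢ)`. Summing over `i` gives the bound.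
-/

lemma mul_one_sub_le_rpow_mul_rpow {x b : ℝ} (hx : x ∈ Set.Icc (0 : ℝ) 1) (hb : b ≤ 1) :
    x * (1 - x) ≤ x ^ b * (1 - x) ^ b :=
  mul_le_mul (Real.self_le_rpow_of_le_one hx.1 hx.2 hb)
    (Real.self_le_rpow_of_le_one (by linarith [hx.2]) (by linarith [hx.1]) hb)
    (by linarith [hx.2]) (Real.rpow_nonneg hx.1 b)

lemma le_ite_add_div_mul_rpow {x y b t : ℝ} (ht : 0 < t) (hb : b ≤ 1)
    (hx : x ∈ Set.Icc (0 : ℝ) 1) (hy : y ≤ 1 - x ^ 2) :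
    y ≤ (if x ≤ t then 1 else 0) + 2 / t * (x ^ b * (1 - x) ^ b) := by
  have hdiv : 0 ≤ 2 / t := by positivity
  split_ifs with hxt
  · have hf : 0 ≤ x ^ b * (1 - x) ^ b :=
      mul_nonneg (Real.rpow_nonneg hx.1 b) (Real.rpow_nonneg (by linarith [hx.2]) b)
    linarith [sq_nonneg x, mul_nonneg hdiv hf]
  · have hy2 : y ≤ 2 * (1 - x) := by nlinarith [hx.1, hx.2]
    have htx : t * (1 - x) ≤ x * (1 - x) :=
      mul_le_mul_of_nonneg_right (by linarith) (by linarith [hx.2])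
    calc y ≤ 2 / t * (t * (1 - x)) := by rwa [← mul_assoc, div_mul_cancel₀ _ ht.ne']
      _ ≤ 2 / t * (x ^ b * (1 - x) ^ b) :=
        mul_le_mul_of_nonneg_left (htx.trans (mul_one_sub_le_rpow_mul_rpow hx hb)) hdiv
      _ = 0 + 2 / t * (x ^ b * (1 - x) ^ b) := (zero_add _).symm

open Finset in
theorem card_below_threshold_general (N : ℕ) (b t : ℝ)
    (hb : b ∈ Set.Ioo (0:ℝ) 1) (ht : t ∈ Set.Ioo (0:ℝ) 1)
    (I z : Fin N → ℝ)
    (hz : ∀ i, z i ∈ Set.Icc (0:ℝ) 1) (hIz : ∀ i, I i ≤ 1 - (z i) ^ 2) :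
    (∑ i, I i) - (2 / t) * ∑ i, (z i) ^ b * (1 - z i) ^ b ≤
      ((univ.filter (fun i => z i ≤ t)).card : ℝ) := by
  have hsum := sum_le_sum fun i (_ : i ∈ univ) =>
    le_ite_add_div_mul_rpow ht.1 hb.2.le (hz i) (hIz i)
  rw [sum_add_distrib, sum_boole, ← mul_sum] at hsum
  linarith

open Finset in
theorem card_below_threshold (N : ℕ) (hN : 0 < N) (b t : ℝ)
    (hb : b ∈ Set.Ioo (0:ℝ) 1) (ht : t ∈ Set.Ioo (0:ℝ) 1)
    (I z : Fin N → ℝ) (hI : ∀ i, I i ∈ Set.Icc (0:ℝ) 1)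
    (hz : ∀ i, z i ∈ Set.Icc (0:ℝ) 1) (hIz : ∀ i, I i ≤ 1 - (z i) ^ 2) :
    (∑ i, I i) - (2 / t) * ∑ i, (z i) ^ b * (1 - z i) ^ b ≤
      ((univ.filter (fun i => z i ≤ t)).card : ℝ) :=
  card_below_threshold_general N b t hb ht I z hz hIz
end

section
/- Let N = M·K with M, K positive integers, and let x₁,…,x_N ∈ [0,1] with average λ = (1/N)Σᵢ xᵢ. Then there exists a partition of {x₁,…,x_N} (as a multiset/indexed family) into K blocks A₁,…,A_K each of size M such that the average of every block Aⱼ is at least λ − 1/M. -/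
/-!
Sort the values increasingly and deal them out round-robin: block `j` receives the sorted
entries in positions `j, j + K, j + 2K, …`. Every entry of a round is at most every entry of
the next round, so the entries of block `i` are dominated by those of block `j` one round later,
except for the last-round entry of block `i`, which is at most `1`. Hence any two block sums differ by at most `1`,
so each block sum is at least the average block sum `M·λ` minus `1`.
-/

open Finset

theorem finProdFinEquiv_lt_of_fst_lt {M K : ℕ} {m m' : Fin M} (i j : Fin K) (h : m < m') :
    finProdFinEquiv (m, i) < finProdFinEquiv (m', j) := by
  rw [Fin.lt_def, finProdFinEquiv_apply_val, finProdFinEquiv_apply_val]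
  have h' : (m : ℕ) + 1 ≤ m' := h
  nlinarith [i.isLt, Nat.mul_le_mul_left K h']

theorem sum_le_sum_add_one_of_rows_ordered {M : ℕ} {ι : Type*} (z : Fin M → ι → ℝ)
    (hz : ∀ m i, z m i ∈ Set.Icc (0 : ℝ) 1)
    (hrows : ∀ m m' i j, m < m' → z m i ≤ z m' j) (i j : ι) :
    ∑ m, z m i ≤ ∑ m, z m j + 1 := by
  cases M with
  | zero => simp
  | succ M =>
    have hshift : ∑ m : Fin M, z m.castSucc i ≤ ∑ m : Fin M, z m.succ j :=
      sum_le_sum fun m _ => hrows _ _ _ _ m.castSucc_lt_succ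
    rw [Fin.sum_univ_castSucc, Fin.sum_univ_succ]
    linarith [(hz 0 j).1, (hz (Fin.last M) i).2]

theorem sum_div_card_sub_le_of_forall_le_add {ι : Type*} [Fintype ι] {c : ι → ℝ} {a : ℝ}
    {j : ι} (h : ∀ i, c i ≤ c j + a) :
    (∑ i, c i) / Fintype.card ι - a ≤ c j := by
  have hcard : (0 : ℝ) < Fintype.card ι := by
    exact_mod_cast Fintype.card_pos_iff.mpr ⟨j⟩
  have hsum : ∑ i, c i ≤ Fintype.card ι * (c j + a) := by
    simpa [mul_add] using sum_le_card_nsmul univ c (c j + a) fun i _ => h i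
  rw [sub_le_iff_le_add, div_le_iff₀ hcard]
  linarith

open Finset in
theorem partition_preserving_average_general (M K : ℕ)
    (x : Fin (M * K) → ℝ) (hx : ∀ i, x i ∈ Set.Icc (0:ℝ) 1)
    (lam : ℝ) (hlam : lam = (1 / (M * K : ℝ)) * ∑ i, x i) :
    ∃ e : Fin (M * K) ≃ Fin K × Fin M,
      ∀ j : Fin K, lam - 1 / M ≤ (1 / (M : ℝ)) * ∑ m : Fin M, x (e.symm (j, m)) := by
  set σ := Tuple.sort x
  set z : Fin M → Fin K → ℝ := fun m j => x (σ (finProdFinEquiv (m, j)))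
  have hrows : ∀ m m' i j, m < m' → z m i ≤ z m' j := fun _ _ i j h =>
    Tuple.monotone_sort x (finProdFinEquiv_lt_of_fst_lt i j h).le
  have htotal : ∑ i, x i = ∑ j, ∑ m, z m j := by
    rw [← Equiv.sum_comp σ, ← Equiv.sum_comp finProdFinEquiv, Fintype.sum_prod_type, sum_comm]
  refine ⟨(σ.symm.trans finProdFinEquiv.symm).trans (Equiv.prodComm _ _), fun j => ?_⟩
  have hcol := sum_div_card_sub_le_of_forall_le_add fun i =>
    sum_le_sum_add_one_of_rows_ordered z (fun _ _ => hx _) hrows i j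
  rw [Fintype.card_fin, ← htotal] at hcol
  calc lam - 1 / M = ((∑ i, x i) / K - 1) / M := by
        rw [hlam, sub_div, div_div, mul_comm (M : ℝ), one_div_mul_eq_div]
    _ ≤ (∑ m, z m j) / M := by gcongr
    _ = 1 / M * ∑ m, z m j := (one_div_mul_eq_div _ _).symm

open Finset in
theorem partition_preserving_average (M K : ℕ) (hM : 0 < M) (hK : 0 < K)
    (x : Fin (M * K) → ℝ) (hx : ∀ i, x i ∈ Set.Icc (0:ℝ) 1)
    (lam : ℝ) (hlam : lam = (1 / (M * K : ℝ)) * ∑ i, x i) :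
    ∃ e : Fin (M * K) ≃ Fin K × Fin M,
      ∀ j : Fin K, lam - 1 / M ≤ (1 / (M : ℝ)) * ∑ m : Fin M, x (e.symm (j, m)) :=
  partition_preserving_average_general M K x hx lam hlam
end
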